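/- Let f be a monic polynomial of degree n over a commutative ring A in which 2 is a regular element (neither zero nor a zero divisor). Then A is the ring of invariants of the splitting algebra A_f under the action of the symmetric group S_n. -/

import Mathlib

open MvPolynomial Polynomial

/-- The ideal `(s₁ - f₁, ..., sₙ - fₙ)` defining the splitting algebra, where
`fᵢ = (-1)^i · coeff f (n - i)` are the signed coefficients of `f`. -/
noncomputable def splittingIdeal (A : Type*) [CommRing A] (f : Polynomial A) (n : ℕ) :
    Ideal (MvPolynomial (Fin n) A) :=
  Ideal.span (Set.range fun i : Fin n =>
    esymm (Fin n) A ((i : ℕ) + 1) -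
      MvPolynomial.C ((-1 : A) ^ ((i : ℕ) + 1) * f.coeff (n - ((i : ℕ) + 1))))

/-- The splitting algebra `A_f = A[t₁,...,tₙ]/(s₁ - f₁, ..., sₙ - fₙ)`. -/
noncomputable def SplittingAlgebra (A : Type*) [CommRing A] (f : Polynomial A) (n : ℕ) :=
  MvPolynomial (Fin n) A ⧸ splittingIdeal A f n

noncomputable instance (A : Type*) [CommRing A] (f : Polynomial A) (n : ℕ) :
    CommRing (SplittingAlgebra A f n) := Ideal.Quotient.commRing _

noncomputable instance (R A : Type*) [CommSemiring R] [CommRing A] [Algebra R A]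
    (f : Polynomial A) (n : ℕ) : Algebra R (SplittingAlgebra A f n) :=
  Ideal.Quotient.algebra R

/-- The universal roots `τᵢ` of `f` in the splitting algebra. -/
noncomputable def univRoot (A : Type*) [CommRing A] (f : Polynomial A) (n : ℕ) (i : Fin n) :
    SplittingAlgebra A f n :=
  Ideal.Quotient.mk (splittingIdeal A f n) (MvPolynomial.X i)

/-- The action of a permutation `σ` on the splitting algebra, sending `τᵢ` to `τ_{σ⁻¹ i}`. -/
noncomputable def permHom (A : Type*) [CommRing A] (f : Polynomial A) (n : ℕ)
    (σ : Equiv.Perm (Fin n)) : SplittingAlgebra A f n →ₐ[A] SplittingAlgebra A f n :=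
  Ideal.Quotient.liftₐ (splittingIdeal A f n)
    ((Ideal.Quotient.mkₐ A (splittingIdeal A f n)).comp
      (rename (σ.symm : Fin n → Fin n)))
    (by
      intro a ha
      have h : splittingIdeal A f n ≤ RingHom.ker
          ((Ideal.Quotient.mkₐ A (splittingIdeal A f n)).comp
            (rename (σ.symm : Fin n → Fin n))) := by
        rw [splittingIdeal, Ideal.span_le]
        rintro _ ⟨i, rfl⟩
        have : (rename (σ.symm : Fin n → Fin n))
            (esymm (Fin n) A ((i : ℕ) + 1) -
              MvPolynomial.C ((-1 : A) ^ ((i : ℕ) + 1) * f.coeff (n - ((i : ℕ) + 1)))) =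
            esymm (Fin n) A ((i : ℕ) + 1) -
              MvPolynomial.C ((-1 : A) ^ ((i : ℕ) + 1) * f.coeff (n - ((i : ℕ) + 1))) := by
          rw [map_sub, rename_esymm, rename_C]
        simp only [SetLike.mem_coe, RingHom.mem_ker, AlgHom.coe_comp, Function.comp_apply, this]
        rw [Ideal.Quotient.mkₐ_eq_mk, Ideal.Quotient.eq_zero_iff_mem]
        exact Ideal.subset_span ⟨i, rfl⟩
      exact h ha)

/-!
Induction on `n`. Let `B = A[X]/(f)` with root `r` and let `g = f / (X - r)` over `B`. Sending the
first universal root to `r` and the others to the universal roots of `g` embeds `A_f` into `B_g`,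
compatibly with the permutations fixing the first root; by induction, an `Sₙ`-invariant element
of `A_f` therefore comes from `B`, i.e. it is `P(τ₀)` with `deg P < n`. Invariance under the
transposition of `τ₀` and `τ₁` gives `P(r) = P(t)` for a universal root `t` of `g` over `B`, hence
`g ∣ P - P(r)` in `B[X]`, so `P - P(r) = P_{n-1} • g`. Comparing the coefficients of `X^{n-2}` in
the basis `1, r, …` of `B` over `A` gives `P_{n-1} = 0`; for `n = 2` the comparison only yields
`2 P₁ = 0`, which is where the regularity of `2` enters. Hence `P` is constant.
-/

open scoped nonZeroDivisors

theorem algebraMap_mem_nonZeroDivisors_of_flat {A S : Type*} [CommRing A] [CommRing S]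
    [Algebra A S] [Module.Flat A S] {a : A} (ha : a ∈ A⁰) : algebraMap A S a ∈ S⁰ :=
  mem_nonZeroDivisors_iff_right.mpr fun z hz =>
    Module.Flat.isSMulRegular_of_nonZeroDivisors ha <| show a • z = a • 0 by
      rwa [smul_zero, Algebra.smul_def, mul_comm]

theorem Polynomial.Monic.eq_mul_C_of_dvd_of_natDegree_le {R : Type*} [Semiring R] {g h : R[X]}
    (hg : g.Monic) (hdvd : g ∣ h) (hle : h.natDegree ≤ g.natDegree) :
    h = g * Polynomial.C (h.coeff g.natDegree) := by
  obtain ⟨q, rfl⟩ := hdvd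
  rcases eq_or_ne q 0 with rfl | hq
  · simp
  have hq0 : q.natDegree = 0 := by rw [hg.natDegree_mul' hq] at hle; omega
  rw [eq_C_of_natDegree_eq_zero hq0, Polynomial.coeff_mul_C, hg.coeff_natDegree, one_mul]

namespace AdjoinRoot

variable {A : Type*} [CommRing A] {f : A[X]}

theorem eq_zero_of_mk_eq_zero_of_natDegree_lt (hf : f.Monic) {p : A[X]}
    (hp : p.natDegree < f.natDegree) (h : mk f p = 0) : p = 0 :=
  by_contra fun hp0 => hf.not_dvd_of_natDegree_lt hp0 hp (mk_eq_zero.mp h)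

theorem algebraMap_injective_of_monic (hf : f.Monic) (hdeg : f.natDegree ≠ 0) :
    Function.Injective (algebraMap A (AdjoinRoot f)) := by
  refine (injective_iff_map_eq_zero _).mpr fun a ha => Polynomial.C_eq_zero.mp ?_
  exact eq_zero_of_mk_eq_zero_of_natDegree_lt hf (by rw [natDegree_C]; omega) (by rwa [mk_C])

theorem nontrivial_of_monic (hf : f.Monic) (hdeg : f.natDegree ≠ 0) :
    Nontrivial (AdjoinRoot f) :=
  have : Nontrivial A := Polynomial.nontrivial_iff.mp
    (nontrivial_of_ne f 0 fun h => hdeg (by rw [h, natDegree_zero]))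
  (algebraMap_injective_of_monic hf hdeg).nontrivial

theorem exists_mk_eq_of_natDegree_lt (hf : f.Monic) (hdeg : f.natDegree ≠ 0) (y : AdjoinRoot f) :
    ∃ P : A[X], P.natDegree < f.natDegree ∧ mk f P = y := by
  obtain ⟨Q, rfl⟩ := mk_surjective y
  refine ⟨Q %ₘ f, natDegree_modByMonic_lt Q hf fun h => hdeg (by rw [h, natDegree_one]), ?_⟩
  rw [← modByMonicHom_mk hf, mk_leftInverse hf]

theorem eq_zero_of_algebraMap_add_algebraMap_mul_root_eq_zero (hf : f.Monic)
    (hdeg : 2 ≤ f.natDegree) {a b : A}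
    (h : algebraMap A (AdjoinRoot f) a + algebraMap A (AdjoinRoot f) b * root f = 0) : b = 0 := by
  have hlin := eq_zero_of_mk_eq_zero_of_natDegree_lt hf
    (p := Polynomial.C b * Polynomial.X + Polynomial.C a)
    (natDegree_linear_le.trans_lt (by omega)) (by simpa [add_comm] using h)
  simpa using congrArg (Polynomial.coeff · 1) hlin

noncomputable def deflation (f : A[X]) : (AdjoinRoot f)[X] :=
  f.map (algebraMap A (AdjoinRoot f)) /ₘ (Polynomial.X - Polynomial.C (root f))

theorem X_sub_C_root_mul_deflation (f : A[X]) :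
    (Polynomial.X - Polynomial.C (root f)) * deflation f = f.map (algebraMap A (AdjoinRoot f)) :=
  mul_divByMonic_eq_iff_isRoot.mpr (isRoot_root f)

theorem monic_deflation (hf : f.Monic) : (deflation f).Monic :=
  (monic_X_sub_C (root f)).of_mul_monic_left (by rw [X_sub_C_root_mul_deflation]; exact hf.map _)

theorem natDegree_deflation (hf : f.Monic) {m : ℕ} (hdeg : f.natDegree = m + 1) :
    (deflation f).natDegree = m := by
  have := nontrivial_of_monic hf (by omega)
  have h := congrArg natDegree (X_sub_C_root_mul_deflation f)
  rw [(monic_X_sub_C _).natDegree_mul (monic_deflation hf), natDegree_X_sub_C,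
    hf.natDegree_map, hdeg] at h
  omega

theorem coeff_deflation (hf : f.Monic) {k : ℕ} (hdeg : f.natDegree = k + 2) :
    (deflation f).coeff k = algebraMap A (AdjoinRoot f) (f.coeff (k + 1)) + root f := by
  have h := congrArg (Polynomial.coeff · (k + 1)) (X_sub_C_root_mul_deflation f)
  have htop : (deflation f).coeff (k + 1) = 1 := by
    rw [← natDegree_deflation hf hdeg]; exact (monic_deflation hf).coeff_natDegree
  simp only [mul_comm (Polynomial.X - Polynomial.C (root f)), coeff_mul_X_sub_C, htop, one_mul,
    Polynomial.coeff_map] at h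
  rw [← h, sub_add_cancel]

theorem mk_eq_algebraMap_coeff_zero_of_deflation_dvd (hf : f.Monic) {k : ℕ}
    (hdeg : f.natDegree = k + 2) (h2 : (2 : A) ∈ A⁰) {P : A[X]} (hP : P.natDegree < k + 2)
    (hdvd : deflation f ∣ P.map (algebraMap A (AdjoinRoot f)) - Polynomial.C (mk f P)) :
    mk f P = algebraMap A (AdjoinRoot f) (P.coeff 0) := by
  have := nontrivial_of_monic hf (by omega)
  set y := mk f P with hy_def
  have hlin : P.map (algebraMap A _) - Polynomial.C y =
      deflation f * Polynomial.C (algebraMap A _ (P.coeff (k + 1))) := by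
    rw [(monic_deflation hf).eq_mul_C_of_dvd_of_natDegree_le hdvd, natDegree_deflation hf hdeg]
    · simp
    · rw [natDegree_deflation hf hdeg]
      refine (natDegree_sub_le _ _).trans (max_le ?_ (by simp))
      exact natDegree_map_le.trans (by omega)
  have hk := congrArg (Polynomial.coeff · k) hlin
  simp only [Polynomial.coeff_sub, Polynomial.coeff_map, Polynomial.coeff_C,
    Polynomial.coeff_mul_C, coeff_deflation hf hdeg] at hk
  have htop : P.coeff (k + 1) = 0 := by
    rcases k with _ | k
    -- the comparison reads `P₁ f₁ + 2 P₁ r = 0`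
    · have hy : y = algebraMap A _ (P.coeff 0) + algebraMap A _ (P.coeff 1) * root f := by
        conv_lhs => rw [hy_def, eq_X_add_C_of_natDegree_le_one (by omega : P.natDegree ≤ 1)]
        simp [add_comm]
      refine mem_nonZeroDivisors_iff_right.mp h2 _ ?_
      refine eq_zero_of_algebraMap_add_algebraMap_mul_root_eq_zero hf (by omega)
        (a := P.coeff 1 * f.coeff 1) ?_
      simp only [if_pos, zero_add, map_mul, map_ofNat] at hk ⊢
      linear_combination -hk - hy
    · refine eq_zero_of_algebraMap_add_algebraMap_mul_root_eq_zero hf (by omega)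
        (a := P.coeff (k + 2) * f.coeff (k + 2) - P.coeff (k + 1)) ?_
      simp only [if_neg (Nat.succ_ne_zero k), map_mul, map_sub] at hk ⊢
      linear_combination -hk
  rw [htop, map_zero, Polynomial.C_0, mul_zero, sub_eq_zero] at hlin
  simpa using (congrArg (Polynomial.coeff · 0) hlin).symm

end AdjoinRoot

namespace SplittingAlgebra

open AdjoinRoot

instance {R A : Type*} [CommSemiring R] [CommRing A] [Algebra R A] (f : A[X]) (n : ℕ) :
    IsScalarTower R A (SplittingAlgebra A f n) :=
  inferInstanceAs (IsScalarTower R A (MvPolynomial (Fin n) A ⧸ splittingIdeal A f n))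

variable {A : Type*} [CommRing A] {f : A[X]} {n m : ℕ} {C : Type*} [CommRing C] [Algebra A C]

theorem mk_eq_aeval_univRoot (p : MvPolynomial (Fin n) A) :
    Ideal.Quotient.mk (splittingIdeal A f n) p = MvPolynomial.aeval (univRoot A f n) p :=
  DFunLike.congr_fun (MvPolynomial.algHom_ext (f := Ideal.Quotient.mkₐ A _)
    (g := MvPolynomial.aeval (univRoot A f n))
    fun i => (MvPolynomial.aeval_X (univRoot A f n) i).symm) p

theorem algHom_ext {φ ψ : SplittingAlgebra A f n →ₐ[A] C}
    (h : ∀ i, φ (univRoot A f n i) = ψ (univRoot A f n i)) : φ = ψ :=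
  Ideal.Quotient.algHom_ext A (MvPolynomial.algHom_ext h)

theorem coeff_prod_X_sub_C (u : Fin n → C) {j : ℕ} (hj : j ≤ n) :
    (∏ i, (Polynomial.X - Polynomial.C (u i))).coeff j =
      (-1) ^ (n - j) * MvPolynomial.aeval u (esymm (Fin n) A (n - j)) := by
  have := Multiset.prod_X_sub_C_coeff (Finset.univ.val.map u) (k := j) (by simpa using hj)
  rw [Multiset.map_map] at this
  rw [aeval_esymm_eq_multiset_esymm, Finset.prod_eq_multiset_prod]
  simpa using this

theorem aeval_univRoot_esymm {k : ℕ} (hk0 : 0 < k) (hkn : k ≤ n) :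
    MvPolynomial.aeval (univRoot A f n) (esymm (Fin n) A k) =
      algebraMap A _ ((-1) ^ k * f.coeff (n - k)) := by
  obtain ⟨i, rfl⟩ : ∃ i, k = i + 1 := ⟨k - 1, by omega⟩
  rw [← mk_eq_aeval_univRoot]
  exact Ideal.Quotient.eq.mpr (Ideal.subset_span ⟨⟨i, hkn⟩, rfl⟩)

theorem prod_X_sub_C_univRoot (hf : f.Monic) (hdeg : f.natDegree = n) :
    ∏ i, (Polynomial.X - Polynomial.C (univRoot A f n i)) =
      f.map (algebraMap A (SplittingAlgebra A f n)) := by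
  ext j
  rw [Polynomial.coeff_map]
  rcases lt_trichotomy j n with hj | rfl | hj
  · rw [coeff_prod_X_sub_C (A := A) _ hj.le, aeval_univRoot_esymm (by omega) (by omega),
      Nat.sub_sub_self hj.le, map_mul, map_pow, map_neg, map_one, ← mul_assoc, ← mul_pow]
    simp
  · rw [coeff_prod_X_sub_C (A := A) _ le_rfl, Nat.sub_self, esymm_zero, ← hdeg,
      hf.coeff_natDegree]
    simp
  · nontriviality SplittingAlgebra A f n
    rw [Polynomial.coeff_eq_zero_of_natDegree_lt (by simpa using hj),
      Polynomial.coeff_eq_zero_of_natDegree_lt (by omega), map_zero]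

theorem aeval_univRoot_self (hf : f.Monic) (hdeg : f.natDegree = n) (i : Fin n) :
    Polynomial.aeval (univRoot A f n i) f = 0 := by
  rw [Polynomial.aeval_def, ← Polynomial.eval_map, ← prod_X_sub_C_univRoot hf hdeg,
    Polynomial.eval_prod]
  exact Finset.prod_eq_zero (Finset.mem_univ i) (by simp)

theorem permHom_univRoot (σ : Equiv.Perm (Fin n)) (i : Fin n) :
    permHom A f n σ (univRoot A f n i) = univRoot A f n (σ.symm i) := by
  change Ideal.Quotient.mk _ (rename _ (MvPolynomial.X i)) = _
  rw [rename_X]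
  rfl

theorem aeval_esymm_of_prod_X_sub_C_eq_map (u : Fin n → C)
    (hu : ∏ i, (Polynomial.X - Polynomial.C (u i)) = f.map (algebraMap A C)) {k : ℕ}
    (hk : k ≤ n) :
    MvPolynomial.aeval u (esymm (Fin n) A k) = algebraMap A C ((-1) ^ k * f.coeff (n - k)) := by
  have h := coeff_prod_X_sub_C (A := A) u (j := n - k) (by omega)
  rw [hu, Polynomial.coeff_map, Nat.sub_sub_self hk] at h
  rw [map_mul, map_pow, map_neg, map_one, h, ← mul_assoc, ← mul_pow]
  simp

noncomputable def lift (u : Fin n → C)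
    (hu : ∏ i, (Polynomial.X - Polynomial.C (u i)) = f.map (algebraMap A C)) :
    SplittingAlgebra A f n →ₐ[A] C :=
  Ideal.Quotient.liftₐ _ (MvPolynomial.aeval u) fun p hp => RingHom.mem_ker.mp <|
    (Ideal.span_le (I := RingHom.ker (MvPolynomial.aeval u))).mpr (by
      rintro _ ⟨i, rfl⟩
      rw [SetLike.mem_coe, RingHom.mem_ker, map_sub, MvPolynomial.aeval_C,
        aeval_esymm_of_prod_X_sub_C_eq_map u hu i.2, sub_self]) hp

@[simp]
theorem lift_univRoot (u : Fin n → C)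
    (hu : ∏ i, (Polynomial.X - Polynomial.C (u i)) = f.map (algebraMap A C)) (i : Fin n) :
    lift u hu (univRoot A f n i) = u i :=
  MvPolynomial.aeval_X u i


noncomputable def rootHom (hf : f.Monic) (hdeg : f.natDegree = m + 1) :
    AdjoinRoot f →ₐ[A] SplittingAlgebra A f (m + 1) :=
  liftAlgHom f (Algebra.ofId _ _) (univRoot A f (m + 1) 0) (aeval_univRoot_self hf hdeg 0)

theorem rootHom_mk (hf : f.Monic) (hdeg : f.natDegree = m + 1) (P : A[X]) :
    rootHom hf hdeg (mk f P) = Polynomial.aeval (univRoot A f (m + 1) 0) P :=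
  rfl

theorem rootHom_root (hf : f.Monic) (hdeg : f.natDegree = m + 1) :
    rootHom hf hdeg (root f) = univRoot A f (m + 1) 0 :=
  liftAlgHom_root ..

variable (f m) in
noncomputable def towerRoots : Fin (m + 1) → SplittingAlgebra (AdjoinRoot f) (deflation f) m :=
  Fin.cons (algebraMap _ _ (root f)) (univRoot _ (deflation f) m)

theorem prod_X_sub_C_towerRoots (hf : f.Monic) (hdeg : f.natDegree = m + 1) :
    ∏ i, (Polynomial.X - Polynomial.C (towerRoots f m i)) =
      f.map (algebraMap A (SplittingAlgebra (AdjoinRoot f) (deflation f) m)) := by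
  rw [Fin.prod_univ_succ]
  simp only [towerRoots, Fin.cons_zero, Fin.cons_succ]
  rw [prod_X_sub_C_univRoot (monic_deflation hf) (natDegree_deflation hf hdeg)]
  calc _ = ((Polynomial.X - Polynomial.C (root f)) * deflation f).map (algebraMap _ _) := by
        rw [Polynomial.map_mul, Polynomial.map_sub, Polynomial.map_X, Polynomial.map_C]
    _ = _ := by
        rw [X_sub_C_root_mul_deflation, Polynomial.map_map, ← IsScalarTower.algebraMap_eq]

noncomputable def towerHom (hf : f.Monic) (hdeg : f.natDegree = m + 1) :
    SplittingAlgebra A f (m + 1) →ₐ[A] SplittingAlgebra (AdjoinRoot f) (deflation f) m :=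
  lift (towerRoots f m) (prod_X_sub_C_towerRoots hf hdeg)

@[simp]
theorem towerHom_univRoot_zero (hf : f.Monic) (hdeg : f.natDegree = m + 1) :
    towerHom hf hdeg (univRoot A f (m + 1) 0) = algebraMap _ _ (root f) :=
  lift_univRoot ..

@[simp]
theorem towerHom_univRoot_succ (hf : f.Monic) (hdeg : f.natDegree = m + 1) (i : Fin m) :
    towerHom hf hdeg (univRoot A f (m + 1) i.succ) = univRoot _ (deflation f) m i :=
  lift_univRoot ..

theorem towerHom_rootHom (hf : f.Monic) (hdeg : f.natDegree = m + 1) (y : AdjoinRoot f) :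
    towerHom hf hdeg (rootHom hf hdeg y) = algebraMap _ _ y := by
  have : (towerHom hf hdeg).comp (rootHom hf hdeg) = IsScalarTower.toAlgHom A _ _ :=
    AdjoinRoot.algHom_ext (by simp [rootHom_root])
  exact DFunLike.congr_fun this y

theorem towerHom_injective (hf : f.Monic) (hdeg : f.natDegree = m + 1) :
    Function.Injective (towerHom hf hdeg) := by
  let : Algebra (AdjoinRoot f) (SplittingAlgebra A f (m + 1)) :=
    (rootHom hf hdeg).toRingHom.toAlgebra
  have : IsScalarTower A (AdjoinRoot f) (SplittingAlgebra A f (m + 1)) :=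
    .of_algebraMap_eq fun a => ((rootHom hf hdeg).commutes a).symm
  have hsplit : ∏ i : Fin m, (Polynomial.X - Polynomial.C (univRoot A f (m + 1) i.succ)) =
      (deflation f).map (algebraMap (AdjoinRoot f) (SplittingAlgebra A f (m + 1))) := by
    apply (monic_X_sub_C (univRoot A f (m + 1) 0)).isRegular.left
    change _ * _ = _ * _
    rw [← Fin.prod_univ_succ (fun i => Polynomial.X - Polynomial.C (univRoot A f (m + 1) i)),
      prod_X_sub_C_univRoot hf hdeg, ← rootHom_root hf hdeg]
    change _ = (Polynomial.X - Polynomial.C (algebraMap (AdjoinRoot f) _ (root f))) * _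
    rw [← Polynomial.map_X (algebraMap (AdjoinRoot f) _), ← Polynomial.map_C,
      ← Polynomial.map_sub, ← Polynomial.map_mul, X_sub_C_root_mul_deflation,
      Polynomial.map_map, ← IsScalarTower.algebraMap_eq]
  have hleft : ((lift _ hsplit).restrictScalars A).comp (towerHom hf hdeg) = AlgHom.id A _ :=
    algHom_ext (Fin.cases (by simpa [RingHom.algebraMap_toAlgebra] using rootHom_root hf hdeg)
      fun i => by simp)
  exact Function.LeftInverse.injective (DFunLike.congr_fun hleft)

theorem towerHom_permHom (hf : f.Monic) (hdeg : f.natDegree = m + 1) (σ : Equiv.Perm (Fin m))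
    (x : SplittingAlgebra A f (m + 1)) :
    towerHom hf hdeg (permHom A f (m + 1) (Equiv.Perm.decomposeFin.symm (0, σ)) x) =
      permHom _ (deflation f) m σ (towerHom hf hdeg x) := by
  set π := Equiv.Perm.decomposeFin.symm (0, σ)
  have hπ_zero : π.symm 0 = 0 :=
    π.symm_apply_eq.mpr (Equiv.Perm.decomposeFin_symm_apply_zero 0 σ).symm
  have hπ_succ (i : Fin m) : π.symm i.succ = (σ.symm i).succ :=
    π.symm_apply_eq.mpr (by simp [π, Equiv.Perm.decomposeFin_symm_apply_succ])
  have : (towerHom hf hdeg).comp (permHom A f (m + 1) π) =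
      ((permHom _ _ m σ).restrictScalars A).comp (towerHom hf hdeg) :=
    algHom_ext (Fin.cases (by simp [permHom_univRoot, hπ_zero])
      fun i => by simp [permHom_univRoot, hπ_succ])
  exact DFunLike.congr_fun this x


variable (f) in
theorem algebraMap_bijective_of_zero :
    Function.Bijective (algebraMap A (SplittingAlgebra A f 0)) := by
  have hI : splittingIdeal A f 0 = ⊥ := by simp [splittingIdeal]
  refine ⟨fun a b hab => MvPolynomial.C_injective (Fin 0) A ?_, fun x => ?_⟩
  · have := Ideal.Quotient.eq.mp hab
    rwa [hI, Ideal.mem_bot, sub_eq_zero] at this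
  · obtain ⟨p, rfl⟩ := Ideal.Quotient.mk_surjective x
    obtain ⟨a, rfl⟩ := MvPolynomial.C_surjective (Fin 0) p
    exact ⟨a, rfl⟩

theorem algebraMap_injective (hf : f.Monic) (hdeg : f.natDegree = n) :
    Function.Injective (algebraMap A (SplittingAlgebra A f n)) := by
  induction n generalizing A with
  | zero => exact (algebraMap_bijective_of_zero f).injective
  | succ m ih =>
    refine Function.Injective.of_comp (f := towerHom hf hdeg) ?_
    have hcomp : towerHom hf hdeg ∘ algebraMap A _ =
        algebraMap (AdjoinRoot f) _ ∘ algebraMap A (AdjoinRoot f) :=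
      funext fun a => ((towerHom hf hdeg).commutes a).trans (IsScalarTower.algebraMap_apply ..)
    rw [hcomp]
    exact (ih (monic_deflation hf) (natDegree_deflation hf hdeg)).comp
      (algebraMap_injective_of_monic hf (by omega))

theorem rootHom_injective (hf : f.Monic) (hdeg : f.natDegree = m + 1) :
    Function.Injective (rootHom hf hdeg) := by
  refine Function.Injective.of_comp (f := towerHom hf hdeg) ?_
  rw [show towerHom hf hdeg ∘ rootHom hf hdeg = algebraMap _ _ from
    funext (towerHom_rootHom hf hdeg)]
  exact algebraMap_injective (monic_deflation hf) (natDegree_deflation hf hdeg)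

theorem deflation_dvd_of_permHom_swap {k : ℕ} (hf : f.Monic) (hdeg : f.natDegree = k + 1 + 1)
    (P : A[X]) (hP : permHom A f (k + 1 + 1) (Equiv.swap 0 1) (rootHom hf hdeg (mk f P)) =
      rootHom hf hdeg (mk f P)) :
    deflation f ∣ P.map (algebraMap A (AdjoinRoot f)) - Polynomial.C (mk f P) := by
  rw [← mk_eq_zero, map_sub, sub_eq_zero]
  apply rootHom_injective (monic_deflation hf) (natDegree_deflation hf hdeg)
  calc rootHom _ _ (mk _ (P.map _))
      = Polynomial.aeval (univRoot _ (deflation f) (k + 1) 0) P := by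
        rw [rootHom_mk, Polynomial.aeval_map_algebraMap]
    _ = towerHom hf hdeg (Polynomial.aeval (univRoot A f (k + 1 + 1) 1) P) := by
        rw [← Polynomial.aeval_algHom_apply]
        exact congrArg (Polynomial.aeval · P) (towerHom_univRoot_succ hf hdeg 0).symm
    _ = towerHom hf hdeg (permHom _ _ _ (Equiv.swap 0 1) (rootHom hf hdeg (mk f P))) := by
        rw [rootHom_mk, ← Polynomial.aeval_algHom_apply (permHom A f _ _), permHom_univRoot,
          Equiv.symm_swap, Equiv.swap_apply_left]
    _ = rootHom _ _ (mk _ (Polynomial.C (mk f P))) := by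
        rw [hP, towerHom_rootHom, mk_C]
        exact (AlgHom.commutes _ _).symm

theorem mem_range_algebraMap_of_forall_permHom_eq (hf : f.Monic)
    (hdeg : f.natDegree = n) (h2 : (2 : A) ∈ A⁰) {x : SplittingAlgebra A f n}
    (hx : ∀ σ, permHom A f n σ x = x) :
    x ∈ (algebraMap A (SplittingAlgebra A f n)).range := by
  induction n generalizing A with
  | zero => exact (algebraMap_bijective_of_zero f).surjective x
  | succ m ih =>
    have : Module.Flat A (AdjoinRoot f) := have := hf.free_adjoinRoot; inferInstance
    have h2' : (2 : AdjoinRoot f) ∈ (AdjoinRoot f)⁰ := by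
      simpa only [map_ofNat] using algebraMap_mem_nonZeroDivisors_of_flat (S := AdjoinRoot f) h2
    obtain ⟨y, hy⟩ := ih (monic_deflation hf) (natDegree_deflation hf hdeg) h2'
      (x := towerHom hf hdeg x) fun σ => by rw [← towerHom_permHom, hx]
    have hxy : x = rootHom hf hdeg y :=
      towerHom_injective hf hdeg (by rw [towerHom_rootHom]; exact hy.symm)
    obtain ⟨P, hPdeg, rfl⟩ := exists_mk_eq_of_natDegree_lt hf (by omega) y
    suffices mk f P = algebraMap A _ (P.coeff 0) from
      ⟨P.coeff 0, by rw [hxy, this]; exact ((rootHom hf hdeg).commutes _).symm⟩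
    rcases m with _ | k
    · conv_lhs => rw [eq_C_of_natDegree_eq_zero (by omega : P.natDegree = 0)]
      exact mk_C _
    · exact mk_eq_algebraMap_coeff_zero_of_deflation_dvd hf hdeg h2 (by omega)
        (deflation_dvd_of_permHom_swap hf hdeg P (by rw [← hxy]; exact hx _))

end SplittingAlgebra

theorem invariants_eq_base_of_two_regular_general {A : Type*} [CommRing A]
    (f : Polynomial A) (n : ℕ) (hmonic : f.Monic) (hdeg : f.natDegree = n)
    (h2reg : (2 : A) ∈ nonZeroDivisors A) :
    ∀ x : SplittingAlgebra A f n,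
      (∀ σ : Equiv.Perm (Fin n), permHom A f n σ x = x) ↔
        x ∈ (algebraMap A (SplittingAlgebra A f n)).range := by
  intro x
  refine ⟨SplittingAlgebra.mem_range_algebraMap_of_forall_permHom_eq hmonic hdeg h2reg, ?_⟩
  rintro ⟨a, rfl⟩ σ
  exact (permHom A f n σ).commutes a

/-- If `2` is regular (neither zero nor a zero divisor) in `A`, then `A` is the ring of
invariants of the splitting algebra `A_f` under the action of the symmetric group `Sₙ`. -/
theorem invariants_eq_base_of_two_regular {A : Type*} [CommRing A]
    (f : Polynomial A) (n : ℕ) (hmonic : f.Monic) (hdeg : f.natDegree = n)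
    (h2ne : (2 : A) ≠ 0) (h2reg : (2 : A) ∈ nonZeroDivisors A) :
    ∀ x : SplittingAlgebra A f n,
      (∀ σ : Equiv.Perm (Fin n), permHom A f n σ x = x) ↔
        x ∈ (algebraMap A (SplittingAlgebra A f n)).range :=
  invariants_eq_base_of_two_regular_general f n hmonic hdeg h2reg
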